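/- arXiv:2302.14304 — 2 statements merged into one kernel-verified Lean document; each statement's English description precedes it below -/
import Mathlib

section
/- For σ < −k − 1/2 (σ ∈ ℝ, k ∈ ℕ) there is a constant C = C(σ, k) such that for all a ≥ 0 and all h ∈ (0, 1]: ∫_{−π/h}^{π/h} (1 + a² + |h⁻¹(e^{−ihη} − 1)|²)^{σ} · |h⁻¹(e^{−ihη} − 1)|^{2k} dη ≤ C (1 + a²)^{σ + k + 1/2}. -/
open MeasureTheory

/-- The symbol of the discrete first divided difference: `ζ(η) = h⁻¹(e^{-ihη} - 1)`. -/
noncomputable def zeta1 (h η : ℝ) : ℂ :=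
  (h : ℂ)⁻¹ * (Complex.exp (-Complex.I * (h : ℂ) * (η : ℂ)) - 1)

open Real

/-!
On `[-π/h, π/h]` Jordan's inequality and `|sin x| ≤ |x|` give `(2/π)|η| ≤ ‖ζ(η)‖ ≤ |η|`, so the
integrand is bounded by `((2/π)²)^σ (1 + a² + η²)^σ η^{2k}`, uniformly in `h`. The substitution
`η = √(1 + a²) t` turns the integral of the latter over `ℝ` into `(1 + a²)^{σ+k+1/2}` times
`∫ (1 + t²)^σ t^{2k} dt`, which is finite because `2σ + 2k < -1`.
-/

lemma norm_zeta1 {h : ℝ} (hh : 0 < h) (η : ℝ) :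
    ‖zeta1 h η‖ = 2 * |sin (h * η / 2)| / h := by
  have harg : -Complex.I * h * η = Complex.I * ((-(h * η) : ℝ) : ℂ) := by push_cast; ring
  rw [zeta1, harg, norm_mul, Complex.norm_exp_I_mul_ofReal_sub_one, norm_inv,
    Complex.norm_real, norm_mul, norm_of_nonneg hh.le, neg_div, sin_neg]
  simp only [Real.norm_eq_abs, abs_neg, abs_two]
  ring

lemma continuous_zeta1 (h : ℝ) : Continuous (zeta1 h) := by
  unfold zeta1
  fun_prop

lemma norm_zeta1_le_abs {h : ℝ} (hh : 0 < h) (η : ℝ) : ‖zeta1 h η‖ ≤ |η| := by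
  rw [norm_zeta1 hh, div_le_iff₀ hh]
  calc 2 * |sin (h * η / 2)| ≤ 2 * |h * η / 2| := by gcongr 2 * ?_; exact abs_sin_le_abs
    _ = |η| * h := by rw [abs_div, abs_mul, abs_of_pos hh, abs_two]; ring

lemma mul_abs_le_norm_zeta1 {h η : ℝ} (hh : 0 < h) (hη : |η| ≤ π / h) :
    2 / π * |η| ≤ ‖zeta1 h η‖ := by
  have habs : |h * η / 2| = h * |η| / 2 := by rw [abs_div, abs_mul, abs_of_pos hh, abs_two]
  have hjordan : 2 / π * |h * η / 2| ≤ |sin (h * η / 2)| := by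
    refine mul_abs_le_abs_sin ?_
    rw [habs, div_le_div_iff_of_pos_right two_pos, ← le_div_iff₀' hh]
    exact hη
  rw [norm_zeta1 hh, le_div_iff₀ hh]
  rw [habs] at hjordan
  linarith

section Weight

variable {σ : ℝ} {k : ℕ} {b : ℝ}

lemma rpow_add_sq_mul_pow_nonneg (hb : 0 ≤ b) (η : ℝ) : 0 ≤ (b + η ^ 2) ^ σ * η ^ (2 * k) := by
  rw [pow_mul]
  positivity

lemma rpow_add_sq_mul_pow_eq_rescale (hb : 0 < b) (η : ℝ) :
    (b + η ^ 2) ^ σ * η ^ (2 * k)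
      = b ^ (σ + k) * ((1 + ((√b)⁻¹ * η) ^ 2) ^ σ * ((√b)⁻¹ * η) ^ (2 * k)) := by
  have hsq : b * ((√b)⁻¹ * η) ^ 2 = η ^ 2 := by
    rw [mul_pow, inv_pow, sq_sqrt hb.le]; field_simp
  have hpow : b ^ k * ((√b)⁻¹ * η) ^ (2 * k) = η ^ (2 * k) := by
    rw [pow_mul, pow_mul, ← mul_pow, hsq]
  rw [rpow_add hb, rpow_natCast, ← hpow, ← hsq, ← mul_one_add, mul_rpow hb.le (by positivity)]
  ring

lemma integrable_rpow_one_add_sq_mul_pow (hσ : σ + k < -1 / 2) :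
    Integrable fun t : ℝ => (1 + t ^ 2) ^ σ * t ^ (2 * k) := by
  have hdom : Integrable fun t : ℝ => (1 + ‖t‖ ^ 2) ^ (-(-2 * (σ + k)) / 2) :=
    integrable_rpow_neg_one_add_norm_sq (by simp only [Module.finrank_self]; push_cast; linarith)
  refine hdom.mono' (by fun_prop) (ae_of_all _ fun t => ?_)
  have h1 : 0 < 1 + t ^ 2 := by positivity
  rw [norm_of_nonneg (rpow_add_sq_mul_pow_nonneg zero_le_one t), Real.norm_eq_abs, sq_abs,
    show -(-2 * (σ + k)) / 2 = σ + k by ring, rpow_add h1, rpow_natCast, pow_mul]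
  gcongr
  linarith

lemma integrable_rpow_add_sq_mul_pow (hσ : σ + k < -1 / 2) (hb : 0 < b) :
    Integrable fun η : ℝ => (b + η ^ 2) ^ σ * η ^ (2 * k) := by
  have hscaled := ((integrable_rpow_one_add_sq_mul_pow hσ).comp_mul_left'
    (inv_ne_zero (sqrt_pos.2 hb).ne')).const_mul (b ^ (σ + k))
  simpa only [← rpow_add_sq_mul_pow_eq_rescale hb] using hscaled

lemma integral_rpow_add_sq_mul_pow (hb : 0 < b) :
    ∫ η : ℝ, (b + η ^ 2) ^ σ * η ^ (2 * k)
      = b ^ (σ + k + 1 / 2) * ∫ t : ℝ, (1 + t ^ 2) ^ σ * t ^ (2 * k) := by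
  simp_rw [rpow_add_sq_mul_pow_eq_rescale hb]
  rw [integral_const_mul,
    Measure.integral_comp_mul_left (fun t : ℝ => (1 + t ^ 2) ^ σ * t ^ (2 * k)), inv_inv,
    smul_eq_mul, abs_of_pos (sqrt_pos.2 hb), sqrt_eq_rpow, ← mul_assoc, ← rpow_add hb]

end Weight

lemma rpow_add_sq_norm_zeta1_mul_pow_le {σ : ℝ} (hσ : σ ≤ 0) (k : ℕ) {b h η : ℝ} (hb : 0 < b)
    (hh : 0 < h) (hη : |η| ≤ π / h) :
    (b + ‖zeta1 h η‖ ^ 2) ^ σ * ‖zeta1 h η‖ ^ (2 * k)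
      ≤ ((2 / π) ^ 2) ^ σ * ((b + η ^ 2) ^ σ * η ^ (2 * k)) := by
  have hc : (2 / π) ^ 2 ≤ 1 := pow_le_one₀ (by positivity) ((div_le_one pi_pos).2 two_le_pi)
  have hlower : (2 / π) ^ 2 * η ^ 2 ≤ ‖zeta1 h η‖ ^ 2 := by
    rw [← sq_abs η, ← mul_pow]
    gcongr
    exact mul_abs_le_norm_zeta1 hh hη
  have hbase : (2 / π) ^ 2 * (b + η ^ 2) ≤ b + ‖zeta1 h η‖ ^ 2 := by
    nlinarith [mul_le_of_le_one_left hb.le hc]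
  have hupper : ‖zeta1 h η‖ ^ (2 * k) ≤ η ^ (2 * k) := by
    rw [← (even_two_mul k).pow_abs η]
    gcongr
    exact norm_zeta1_le_abs hh η
  rw [← mul_assoc, ← mul_rpow (sq_nonneg _) (by positivity : 0 ≤ b + η ^ 2)]
  gcongr ?_ * ?_
  exact rpow_le_rpow_of_nonpos (by positivity) hbase hσ

/-- For `σ < -k - 1/2` there is `C = C(σ,k)` such that for all `a ≥ 0`, `h ∈ (0,1]`:
`∫_{-π/h}^{π/h} (1 + a² + |h⁻¹(e^{-ihη}-1)|²)^σ |h⁻¹(e^{-ihη}-1)|^{2k} dη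
  ≤ C (1 + a²)^{σ+k+1/2}`. -/
theorem scalar_weight_integral_estimate (σ : ℝ) (k : ℕ) (hσ : σ < -(k : ℝ) - 1 / 2) :
    ∃ C : ℝ, 0 < C ∧
      ∀ a : ℝ, 0 ≤ a → ∀ h : ℝ, 0 < h → h ≤ 1 →
        ∫ η in Set.Icc (-(Real.pi / h)) (Real.pi / h),
            (1 + a ^ 2 + ‖zeta1 h η‖ ^ 2) ^ σ
              * ‖zeta1 h η‖ ^ (2 * k)
          ≤ C * (1 + a ^ 2) ^ (σ + (k : ℝ) + 1 / 2) := by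
  have hσk : σ + k < -1 / 2 := by linarith
  set I := ∫ t : ℝ, (1 + t ^ 2) ^ σ * t ^ (2 * k)
  have hI : 0 ≤ I := integral_nonneg (rpow_add_sq_mul_pow_nonneg zero_le_one)
  refine ⟨((2 / π) ^ 2) ^ σ * I + 1, by positivity, fun a _ h hh _ => ?_⟩
  have hb : 0 < 1 + a ^ 2 := by positivity
  have hcont : Continuous fun η => (1 + a ^ 2 + ‖zeta1 h η‖ ^ 2) ^ σ * ‖zeta1 h η‖ ^ (2 * k) :=
    ((continuous_const.add ((continuous_zeta1 h).norm.pow 2)).rpow_const fun η =>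
      Or.inl (by positivity : 0 < 1 + a ^ 2 + ‖zeta1 h η‖ ^ 2).ne').mul
      ((continuous_zeta1 h).norm.pow _)
  have hdom := (integrable_rpow_add_sq_mul_pow hσk hb).const_mul (((2 / π) ^ 2) ^ σ)
  calc _ ≤ ∫ η in Set.Icc (-(π / h)) (π / h),
          ((2 / π) ^ 2) ^ σ * ((1 + a ^ 2 + η ^ 2) ^ σ * η ^ (2 * k)) :=
        setIntegral_mono_on hcont.integrableOn_Icc hdom.integrableOn measurableSet_Icc
          fun η hη => rpow_add_sq_norm_zeta1_mul_pow_le (by linarith) k hb hh (abs_le.2 hη)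
    _ ≤ ∫ η, ((2 / π) ^ 2) ^ σ * ((1 + a ^ 2 + η ^ 2) ^ σ * η ^ (2 * k)) :=
        setIntegral_le_integral hdom
          (ae_of_all _ fun η => mul_nonneg (by positivity) (rpow_add_sq_mul_pow_nonneg hb.le η))
    _ = ((2 / π) ^ 2) ^ σ * I * (1 + a ^ 2) ^ (σ + k + 1 / 2) := by
        rw [integral_const_mul, integral_rpow_add_sq_mul_pow hb]
        ring
    _ ≤ _ := by gcongr; linarith
end

section
/- Let æ > 1 and γ > 1, and let A_≠ : ℝ² → ℂ satisfy c₁(1+|ξ|)^{æ} ≤ |A_≠(ξ)| ≤ c₂(1+|ξ|)^{æ} (so |A_≠⁻¹(ξ)A_≠(ξ₁,0)| ≤ (c₂/c₁)(1+|ξ₁|)^{æ}(1+|ξ|)^{−æ}), and let g̃ : ℝ → ℂ satisfy |g̃(ξ₁)| ≤ C_γ(1+|ξ₁|)^{−γ−æ}. Then for every h ∈ (0,1] and every x ∈ ℝ²: |∫_{ℝ²\[−π/h,π/h]²} e^{i x·ξ} A_≠⁻¹(ξ) A_≠(ξ₁, 0) g̃(ξ₁) dξ| ≤ C h^{β}, where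 β = min(æ − 1, γ − 1) > 0 and C depends only on c₁, c₂, C_γ, æ, γ. -/
/-!
The integrand is dominated by the tensor product `(c₂ Cγ / c₁) (1 + |ξ₁|)^(-γ) (1 + |ξ₂|)^(-æ)`:
the symbol ratio contributes `(1 + |ξ₁|)^æ (1 + |ξ|)^(-æ) ≤ (1 + |ξ₁|)^æ (1 + |ξ₂|)^(-æ)`, and
the factor `(1 + |ξ₁|)^æ` is absorbed by the decay of `g̃`. The complement of the square lies in
the union of the slabs `|ξ₁| > π/h` and `|ξ₂| > π/h`, over each of which the integral of a
tensor product factors into one-dimensional integrals: a tail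
`∫_{|t|>R} (1 + |t|)^(-p) = 2 (1 + R)^(1-p) / (p - 1)` times a finite total integral.
With `R = π/h ≥ 1/h` the two tails are `O(h^(γ-1))` and `O(h^(æ-1))`.
-/

open MeasureTheory Set Real
open scoped ENNReal

theorem setLIntegral_abs_gt_comp_abs {f : ℝ → ℝ≥0∞} (hf : Measurable f) {R : ℝ} (hR : 0 ≤ R) :
    ∫⁻ t in {t : ℝ | R < |t|}, f |t| = 2 * ∫⁻ t in Ioi R, f t := by
  have h_even : {t : ℝ | R < |t|}.indicator (fun t => f |t|)
      = fun t => (Ioi R).indicator f t + (Ioi R).indicator f (-t) := by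
    ext t
    rcases le_or_gt 0 t with ht | ht
    · simp only [indicator_apply, mem_ofPred_eq, mem_Ioi, abs_of_nonneg ht]
      split_ifs <;> first | linarith | simp
    · simp only [indicator_apply, mem_ofPred_eq, mem_Ioi, abs_of_neg ht]
      split_ifs <;> first | linarith | simp
  rw [← lintegral_indicator (measurableSet_lt measurable_const measurable_abs), h_even,
    lintegral_add_left (hf.indicator measurableSet_Ioi), lintegral_neg_eq_self,
    lintegral_indicator measurableSet_Ioi, two_mul]

theorem lintegral_Ioi_one_add_rpow_neg {p R : ℝ} (hp : 1 < p) (hR : -1 < R) :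
    ∫⁻ t in Ioi R, ENNReal.ofReal ((1 + t) ^ (-p))
      = ENNReal.ofReal ((1 + R) ^ (1 - p) / (p - 1)) := by
  have h_shift := (measurePreserving_add_left (volume : Measure ℝ) 1).setLIntegral_comp_preimage_emb
    (measurableEmbedding_addLeft 1) (fun t => ENNReal.ofReal (t ^ (-p))) (Ioi (1 + R))
  rw [preimage_const_add_Ioi, add_sub_cancel_left] at h_shift
  rw [h_shift, ← ofReal_integral_eq_lintegral_ofReal
      (integrableOn_Ioi_rpow_of_lt (by linarith) (by linarith))
      (ae_restrict_of_forall_mem measurableSet_Ioi fun t ht =>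
        rpow_nonneg (by linarith [mem_Ioi.mp ht]) _),
    integral_Ioi_rpow_of_lt (by linarith) (by linarith)]
  congr 1
  rw [show -p + 1 = 1 - p by ring, neg_div, ← div_neg, neg_sub]

theorem lintegral_abs_gt_one_add_abs_rpow_neg {p R : ℝ} (hp : 1 < p) (hR : 0 ≤ R) :
    ∫⁻ t in {t : ℝ | R < |t|}, ENNReal.ofReal ((1 + |t|) ^ (-p))
      = ENNReal.ofReal (2 / (p - 1) * (1 + R) ^ (1 - p)) := by
  rw [setLIntegral_abs_gt_comp_abs (f := fun t => ENNReal.ofReal ((1 + t) ^ (-p)))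
      (by fun_prop) hR,
    lintegral_Ioi_one_add_rpow_neg hp (by linarith), ← ENNReal.ofReal_ofNat 2,
    ← ENNReal.ofReal_mul zero_le_two]
  congr 1
  ring

theorem lintegral_one_add_abs_rpow_neg {p : ℝ} (hp : 1 < p) :
    ∫⁻ t, ENNReal.ofReal ((1 + |t|) ^ (-p)) = ENNReal.ofReal (2 / (p - 1)) := by
  have h_compl : {t : ℝ | 0 < |t|} = {0}ᶜ := by ext t; simp
  rw [← restrict_compl_singleton (μ := volume) (0 : ℝ), ← h_compl,
    lintegral_abs_gt_one_add_abs_rpow_neg hp le_rfl]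
  simp

theorem setLIntegral_fst_mem_or_snd_mem_mul_le {α β : Type*} [MeasurableSpace α]
    [MeasurableSpace β] {μ : Measure α} {ν : Measure β} [SFinite μ] [SFinite ν]
    {f : α → ℝ≥0∞} {g : β → ℝ≥0∞} (hf : AEMeasurable f μ) (hg : AEMeasurable g ν)
    (s : Set α) (t : Set β) :
    ∫⁻ z in {z : α × β | z.1 ∈ s ∨ z.2 ∈ t}, f z.1 * g z.2 ∂μ.prod ν
      ≤ (∫⁻ x in s, f x ∂μ) * (∫⁻ y, g y ∂ν) + (∫⁻ x, f x ∂μ) * ∫⁻ y in t, g y ∂ν := by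
  have h_union : {z : α × β | z.1 ∈ s ∨ z.2 ∈ t} = s ×ˢ univ ∪ univ ×ˢ t := by
    ext z; simp
  rw [h_union]
  refine (lintegral_union_le _ _ _).trans (add_le_add (le_of_eq ?_) (le_of_eq ?_))
  · rw [← Measure.prod_restrict, Measure.restrict_univ, lintegral_prod_mul hf.restrict hg]
  · rw [← Measure.prod_restrict, Measure.restrict_univ, lintegral_prod_mul hf hg.restrict]

theorem lintegral_outside_square_le {p q R : ℝ} (hp : 1 < p) (hq : 1 < q) (hR : 0 ≤ R) :
    ∫⁻ ξ in {ξ : ℝ × ℝ | R < |ξ.1| ∨ R < |ξ.2|},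
        ENNReal.ofReal ((1 + |ξ.1|) ^ (-p)) * ENNReal.ofReal ((1 + |ξ.2|) ^ (-q))
      ≤ ENNReal.ofReal
          (2 / (p - 1) * (2 / (q - 1)) * ((1 + R) ^ (1 - p) + (1 + R) ^ (1 - q))) := by
  have h := setLIntegral_fst_mem_or_snd_mem_mul_le (μ := volume) (ν := volume)
    (f := fun t => ENNReal.ofReal ((1 + |t|) ^ (-p)))
    (g := fun t => ENNReal.ofReal ((1 + |t|) ^ (-q))) (by fun_prop) (by fun_prop)
    {t | R < |t|} {t | R < |t|}
  rw [← Measure.volume_eq_prod, lintegral_abs_gt_one_add_abs_rpow_neg hp hR,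
    lintegral_abs_gt_one_add_abs_rpow_neg hq hR, lintegral_one_add_abs_rpow_neg hp,
    lintegral_one_add_abs_rpow_neg hq, ← ENNReal.ofReal_mul (by positivity),
    ← ENNReal.ofReal_mul (by positivity), ← ENNReal.ofReal_add (by positivity) (by positivity)]
    at h
  refine h.trans_eq (congrArg ENNReal.ofReal ?_)
  ring

theorem one_add_pi_div_rpow_le {h p β : ℝ} (h0 : 0 < h) (h1 : h ≤ 1) (hβ : β ≤ p - 1)
    (hp : 1 ≤ p) :
    (1 + π / h) ^ (1 - p) ≤ h ^ β := by
  have h_inv_le : h⁻¹ ≤ 1 + π / h := by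
    rw [inv_eq_one_div]
    have : 1 / h ≤ π / h := div_le_div_of_nonneg_right (by linarith [pi_gt_three]) h0.le
    linarith
  calc (1 + π / h) ^ (1 - p) ≤ h⁻¹ ^ (1 - p) :=
        rpow_le_rpow_of_nonpos (inv_pos.mpr h0) h_inv_le (by linarith)
    _ = h ^ (p - 1) := by rw [inv_rpow h0.le, ← rpow_neg h0.le, neg_sub]
    _ ≤ h ^ β := rpow_le_rpow_of_exponent_ge h0 h1 hβ

theorem norm_exp_I_mul_dot (x ξ : ℝ × ℝ) :
    ‖Complex.exp (Complex.I * ((x.1 : ℂ) * (ξ.1 : ℂ) + (x.2 : ℂ) * (ξ.2 : ℂ)))‖ = 1 := by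
  have h : Complex.I * ((x.1 : ℂ) * (ξ.1 : ℂ) + (x.2 : ℂ) * (ξ.2 : ℂ))
      = ((x.1 * ξ.1 + x.2 * ξ.2 : ℝ) : ℂ) * Complex.I := by
    push_cast; ring
  rw [h, Complex.norm_exp_ofReal_mul_I]

theorem norm_inv_mul_apply_fst_le {A : ℝ × ℝ → ℂ} {ae c₁ c₂ : ℝ} (hc₁ : 0 < c₁)
    (hAbd : ∀ ξ : ℝ × ℝ,
      c₁ * (1 + |ξ.1| + |ξ.2|) ^ ae ≤ ‖A ξ‖ ∧ ‖A ξ‖ ≤ c₂ * (1 + |ξ.1| + |ξ.2|) ^ ae)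
    (ξ : ℝ × ℝ) :
    ‖(A ξ)⁻¹ * A (ξ.1, 0)‖ ≤ c₂ / c₁ * (1 + |ξ.1|) ^ ae * (1 + |ξ.1| + |ξ.2|) ^ (-ae) := by
  have h_pos : 0 < c₁ * (1 + |ξ.1| + |ξ.2|) ^ ae := by positivity
  have h_inv : ‖(A ξ)⁻¹‖ ≤ (c₁ * (1 + |ξ.1| + |ξ.2|) ^ ae)⁻¹ := by
    rw [norm_inv]; exact inv_anti₀ h_pos (hAbd ξ).1
  have h_fst : ‖A (ξ.1, 0)‖ ≤ c₂ * (1 + |ξ.1|) ^ ae := by simpa using (hAbd (ξ.1, 0)).2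
  rw [norm_mul, rpow_neg (by positivity)]
  calc ‖(A ξ)⁻¹‖ * ‖A (ξ.1, 0)‖
      ≤ (c₁ * (1 + |ξ.1| + |ξ.2|) ^ ae)⁻¹ * (c₂ * (1 + |ξ.1|) ^ ae) :=
        mul_le_mul h_inv h_fst (norm_nonneg _) (inv_nonneg.mpr h_pos.le)
    _ = _ := by field_simp

theorem norm_integrand_le {A : ℝ × ℝ → ℂ} {g : ℝ → ℂ} {ae γ c₁ c₂ Cγ : ℝ} (hae : 0 ≤ ae)
    (hc₁ : 0 < c₁) (hc₂ : 0 ≤ c₂) (hCγ : 0 ≤ Cγ)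
    (hAbd : ∀ ξ : ℝ × ℝ,
      c₁ * (1 + |ξ.1| + |ξ.2|) ^ ae ≤ ‖A ξ‖ ∧ ‖A ξ‖ ≤ c₂ * (1 + |ξ.1| + |ξ.2|) ^ ae)
    (hgbd : ∀ t : ℝ, ‖g t‖ ≤ Cγ * (1 + |t|) ^ (-(γ + ae))) (x ξ : ℝ × ℝ) :
    ‖Complex.exp (Complex.I * ((x.1 : ℂ) * (ξ.1 : ℂ) + (x.2 : ℂ) * (ξ.2 : ℂ)))
        * (A ξ)⁻¹ * A (ξ.1, 0) * g ξ.1‖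
      ≤ c₂ * Cγ / c₁ * ((1 + |ξ.1|) ^ (-γ) * (1 + |ξ.2|) ^ (-ae)) := by
  have hu : 0 < 1 + |ξ.1| := by positivity
  have h_decay : (1 + |ξ.1| + |ξ.2|) ^ (-ae) ≤ (1 + |ξ.2|) ^ (-ae) :=
    rpow_le_rpow_of_nonpos (by positivity) (by linarith [abs_nonneg ξ.1]) (by linarith)
  rw [mul_assoc (Complex.exp _), norm_mul, norm_mul, norm_exp_I_mul_dot, one_mul]
  calc ‖(A ξ)⁻¹ * A (ξ.1, 0)‖ * ‖g ξ.1‖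
      ≤ (c₂ / c₁ * (1 + |ξ.1|) ^ ae * (1 + |ξ.1| + |ξ.2|) ^ (-ae))
          * (Cγ * (1 + |ξ.1|) ^ (-(γ + ae))) :=
        mul_le_mul (norm_inv_mul_apply_fst_le hc₁ hAbd ξ) (hgbd ξ.1) (norm_nonneg _)
          (by positivity)
    _ ≤ (c₂ / c₁ * (1 + |ξ.1|) ^ ae * (1 + |ξ.2|) ^ (-ae))
          * (Cγ * (1 + |ξ.1|) ^ (-(γ + ae))) := by
        gcongr
    _ = c₂ * Cγ / c₁
          * ((1 + |ξ.1|) ^ ae * (1 + |ξ.1|) ^ (-(γ + ae)) * (1 + |ξ.2|) ^ (-ae)) := by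
        ring
    _ = c₂ * Cγ / c₁ * ((1 + |ξ.1|) ^ (-γ) * (1 + |ξ.2|) ^ (-ae)) := by
        rw [← rpow_add hu, show ae + -(γ + ae) = -γ by ring]

theorem discrete_continuous_comparison_general (ae γ c₁ c₂ Cγ : ℝ)
    (hae : 1 < ae) (hγ : 1 < γ) (hc₁ : 0 < c₁) (hc₂ : 0 < c₂) (hCγ : 0 < Cγ)
    (A : ℝ × ℝ → ℂ)
    (hAbd : ∀ ξ : ℝ × ℝ,
      c₁ * (1 + |ξ.1| + |ξ.2|) ^ ae ≤ ‖A ξ‖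
        ∧ ‖A ξ‖ ≤ c₂ * (1 + |ξ.1| + |ξ.2|) ^ ae)
    (g : ℝ → ℂ)
    (hgbd : ∀ t : ℝ, ‖g t‖ ≤ Cγ * (1 + |t|) ^ (-(γ + ae))) :
    ∃ C : ℝ, 0 < C ∧
      ∀ h : ℝ, 0 < h → h ≤ 1 → ∀ x : ℝ × ℝ,
        ‖∫ ξ in {ξ : ℝ × ℝ | Real.pi / h < |ξ.1| ∨ Real.pi / h < |ξ.2|},
            Complex.exp (Complex.I * ((x.1 : ℂ) * (ξ.1 : ℂ) + (x.2 : ℂ) * (ξ.2 : ℂ)))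
              * (A ξ)⁻¹ * A (ξ.1, 0) * g ξ.1‖
          ≤ C * h ^ (min (ae - 1) (γ - 1)) := by
  set K := c₂ * Cγ / c₁
  set E := 2 / (γ - 1) * (2 / (ae - 1))
  refine ⟨K * E * 2, by positivity, fun h h0 h1 x => ?_⟩
  set R := π / h
  have h_tail : (1 + R) ^ (1 - γ) + (1 + R) ^ (1 - ae) ≤ 2 * h ^ min (ae - 1) (γ - 1) := by
    linarith [one_add_pi_div_rpow_le h0 h1 (min_le_right (ae - 1) _) hγ.le,
      one_add_pi_div_rpow_le h0 h1 (min_le_left _ (γ - 1)) hae.le]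
  refine (norm_integral_le_lintegral_norm _).trans <|
    (ENNReal.toReal_le_of_le_ofReal (b := K * (E * ((1 + R) ^ (1 - γ) + (1 + R) ^ (1 - ae))))
      (by positivity) ?_).trans
    (by linarith [mul_le_mul_of_nonneg_left h_tail (by positivity : 0 ≤ K * E)])
  calc _ ≤ ∫⁻ ξ in {ξ : ℝ × ℝ | R < |ξ.1| ∨ R < |ξ.2|}, ENNReal.ofReal K
          * (ENNReal.ofReal ((1 + |ξ.1|) ^ (-γ)) * ENNReal.ofReal ((1 + |ξ.2|) ^ (-ae))) := by
        refine lintegral_mono fun ξ => ?_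
        rw [← ENNReal.ofReal_mul (by positivity), ← ENNReal.ofReal_mul (by positivity)]
        exact ENNReal.ofReal_le_ofReal
          (norm_integrand_le (by linarith) hc₁ hc₂.le hCγ.le hAbd hgbd x ξ)
    _ = ENNReal.ofReal K * ∫⁻ ξ in {ξ : ℝ × ℝ | R < |ξ.1| ∨ R < |ξ.2|},
          ENNReal.ofReal ((1 + |ξ.1|) ^ (-γ)) * ENNReal.ofReal ((1 + |ξ.2|) ^ (-ae)) :=
        lintegral_const_mul' _ _ ENNReal.ofReal_ne_top
    _ ≤ ENNReal.ofReal K * ENNReal.ofReal (E * ((1 + R) ^ (1 - γ) + (1 + R) ^ (1 - ae))) := by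
        gcongr
        exact lintegral_outside_square_le hγ hae (by positivity)
    _ = _ := (ENNReal.ofReal_mul (by positivity)).symm

/-- Quantitative core of Theorem 4 (comparison of discrete and continuous solutions):
if `c₁(1+|ξ₁|+|ξ₂|)^æ ≤ |A_≠(ξ)| ≤ c₂(1+|ξ₁|+|ξ₂|)^æ` with `æ > 1`, and
`|g̃(ξ₁)| ≤ C_γ(1+|ξ₁|)^{-γ-æ}` with `γ > 1`, then the Fourier integral over the
complement of the period square is `O(h^β)` with `β = min(æ-1, γ-1)`, the constant
depending only on `c₁, c₂, C_γ, æ, γ`. -/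
theorem discrete_continuous_comparison (ae γ c₁ c₂ Cγ : ℝ)
    (hae : 1 < ae) (hγ : 1 < γ) (hc₁ : 0 < c₁) (hc₂ : 0 < c₂) (hCγ : 0 < Cγ)
    (A : ℝ × ℝ → ℂ) (hA : Measurable A)
    (hAbd : ∀ ξ : ℝ × ℝ,
      c₁ * (1 + |ξ.1| + |ξ.2|) ^ ae ≤ ‖A ξ‖
        ∧ ‖A ξ‖ ≤ c₂ * (1 + |ξ.1| + |ξ.2|) ^ ae)
    (g : ℝ → ℂ) (hg : Measurable g)
    (hgbd : ∀ t : ℝ, ‖g t‖ ≤ Cγ * (1 + |t|) ^ (-(γ + ae))) :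
    ∃ C : ℝ, 0 < C ∧
      ∀ h : ℝ, 0 < h → h ≤ 1 → ∀ x : ℝ × ℝ,
        ‖∫ ξ in {ξ : ℝ × ℝ | Real.pi / h < |ξ.1| ∨ Real.pi / h < |ξ.2|},
            Complex.exp (Complex.I * ((x.1 : ℂ) * (ξ.1 : ℂ) + (x.2 : ℂ) * (ξ.2 : ℂ)))
              * (A ξ)⁻¹ * A (ξ.1, 0) * g ξ.1‖
          ≤ C * h ^ (min (ae - 1) (γ - 1)) :=
  discrete_continuous_comparison_general ae γ c₁ c₂ Cγ hae hγ hc₁ hc₂ hCγ A hAbd g hgbd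
end
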